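/- Let a ∈ B^{n-k,k} and b ∈ B_a^{n-k,k}. Then the intersection S_a ∩ S_b ⊆ (S²)^n is homeomorphic to (S²)^c, where c is the number of circle components of the one-manifold aw(b). -/

import Mathlib

/-- A noncrossing matching of type `(n-k, k)`: `k` pairwise-noncrossing arcs above a
horizontal line of `n` vertices (labelled `1,…,n`); the remaining `n-2k` vertices carry
rays, and no ray lies beneath an arc (every vertex strictly between the endpoints of an
arc is an endpoint of some arc). -/
structure NCMatching (n k : ℕ) where
  arcs : Finset (ℕ × ℕ)
  card_arcs : arcs.card = k
  mem_range : ∀ p ∈ arcs, 1 ≤ p.1 ∧ p.1 < p.2 ∧ p.2 ≤ n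
  endpoints_distinct : ∀ p ∈ arcs, ∀ q ∈ arcs, p ≠ q →
    p.1 ≠ q.1 ∧ p.1 ≠ q.2 ∧ p.2 ≠ q.1 ∧ p.2 ≠ q.2
  noncross : ∀ p ∈ arcs, ∀ q ∈ arcs, ¬ (p.1 < q.1 ∧ q.1 < p.2 ∧ p.2 < q.2)
  no_ray_under : ∀ p ∈ arcs, ∀ r, p.1 < r → r < p.2 → ∃ q ∈ arcs, r = q.1 ∨ r = q.2

/-- Vertex `i` carries a ray of the matching `m`. -/
def NCMatching.IsRay {n k : ℕ} (m : NCMatching n k) (i : ℕ) : Prop :=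
  1 ≤ i ∧ i ≤ n ∧ ∀ p ∈ m.arcs, p.1 ≠ i ∧ p.2 ≠ i

/-- The adjacency relation on vertices coming from the glued one-manifold `a w(b)`:
two vertices are related if an arc of `a` or an arc of (the reflection of) `b` joins them. -/
def glueRel {n k : ℕ} (a b : NCMatching n k) (i j : ℕ) : Prop :=
  (i, j) ∈ a.arcs ∨ (j, i) ∈ a.arcs ∨ (i, j) ∈ b.arcs ∨ (j, i) ∈ b.arcs

/-- Two vertices lie on the same connected component of `a w(b)`. -/
def Conn {n k : ℕ} (a b : NCMatching n k) : ℕ → ℕ → Prop :=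
  Relation.ReflTransGen (glueRel a b)

/-- `b ∈ B_a^{n-k,k}`: every line segment of `a w(b)` has endpoints pointing in opposite
directions, i.e. no component of `a w(b)` contains two distinct rays of `a`, nor two
distinct rays of `b`. -/
def InBa {n k : ℕ} (a b : NCMatching n k) : Prop :=
  (∀ i j, a.IsRay i → a.IsRay j → i ≠ j → ¬ Conn a b i j) ∧
  (∀ i j, b.IsRay i → b.IsRay j → i ≠ j → ¬ Conn a b i j)

/-- The north pole `p = (0,0,1)` of the unit two-sphere in `ℝ³`. -/
noncomputable def np : EuclideanSpace ℝ (Fin 3) := WithLp.toLp 2 ![0, 0, 1]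

/-- The component `S_m ⊆ (S²)^n` of a matching `m`: each coordinate lies on the unit
sphere, coordinates agree along the arcs of `m`, and the coordinate at a ray vertex `i`
equals `(-1)^i p` (the vertex `i : Fin n` has label `i+1`). -/
def SComp {n k : ℕ} (m : NCMatching n k) : Set (Fin n → EuclideanSpace ℝ (Fin 3)) :=
  {x | (∀ i, ‖x i‖ = 1) ∧
    (∀ p ∈ m.arcs, ∀ i j : Fin n, (i : ℕ) + 1 = p.1 → (j : ℕ) + 1 = p.2 → x i = x j) ∧
    (∀ i : Fin n, m.IsRay ((i : ℕ) + 1) → x i = ((-1 : ℝ) ^ ((i : ℕ) + 1)) • np)}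

/-- The glue relation transported to `Fin n` (the vertex `i : Fin n` has label `i+1`). -/
def glueRelF {n k : ℕ} (a b : NCMatching n k) (i j : Fin n) : Prop :=
  glueRel a b ((i : ℕ) + 1) ((j : ℕ) + 1)

/-- A component of `a w(b)` is a circle when none of its vertices carries a ray
of `a` or of `b`. -/
def IsCircleClass {n k : ℕ} (a b : NCMatching n k) (q : Quot (glueRelF a b)) : Prop :=
  ∀ i : Fin n, Quot.mk _ i = q → ¬ a.IsRay ((i : ℕ) + 1) ∧ ¬ b.IsRay ((i : ℕ) + 1)

/-- The number of circle components of the glued one-manifold `a w(b)`. -/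
noncomputable def circles {n k : ℕ} (a b : NCMatching n k) : ℕ :=
  Nat.card {q : Quot (glueRelF a b) // IsCircleClass a b q}

/-! Every arc of a noncrossing matching joins vertices of opposite parity, because the vertices
beneath it are matched among themselves. Orient each arc of `a` from its odd to its even end and
each arc of `b` from its even to its odd end: every vertex then has at most one outgoing edge, and
an odd ray of `a` or an even ray of `b` has none. Following outgoing edges from any vertex of a
component that contains such a sink leads to it, so a component has at most one sink: an odd ray
of `a` and an even ray of `b` never lie on a common line. For `b ∈ B_a` this forces all rays on
a line to have the same parity, hence to prescribe the same pole `±p`. A point of `S_a ∩ S_b` is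
constant on the components of `a w(b)`, equal to that pole on each line, and arbitrary on each
circle. -/

theorem Finset.even_card_of_involution {α : Type*} [DecidableEq α] {s : Finset α} (f : α → α)
    (hs : ∀ x ∈ s, f x ∈ s) (hf : ∀ x ∈ s, f (f x) = x) (hne : ∀ x ∈ s, f x ≠ x) :
    Even s.card := by
  let g : Function.End s := fun x => ⟨f x, hs x x.2⟩
  have hg : g ^ 2 ^ 1 = 1 := funext fun x => Subtype.ext (hf x x.2)
  have hcard := Equiv.Perm.card_fixedPoints_modEq (p := 2) hg
  have hfix : Fintype.card (Function.fixedPoints g) = 0 :=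
    Fintype.card_eq_zero_iff.2 ⟨fun x => hne x.1 x.1.2 (congrArg Subtype.val x.2)⟩
  rw [hfix, Fintype.card_coe] at hcard
  exact Nat.even_iff.2 hcard

theorem Relation.ReflTransGen.eq_of_isFixedPt {α : Type*} {r : α → α → Prop} {f : α → α}
    (hf : ∀ z z', r z z' → z' = f z ∨ z = f z') {x y : α} (h : ReflTransGen r x y)
    (hx : Function.IsFixedPt f x) (hy : Function.IsFixedPt f y) : x = y := by
  have reach : ∀ z, ReflTransGen r x z → ∃ m, f^[m] z = x := by
    intro z hz
    induction hz with
    | refl => exact ⟨0, rfl⟩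
    | tail _ hzz' ih =>
      obtain ⟨m, hm⟩ := ih
      rcases hf _ _ hzz' with rfl | rfl
      · cases m with
        | zero => exact ⟨0, by simp_all [Function.IsFixedPt]⟩
        | succ m => exact ⟨m, hm⟩
      · exact ⟨m + 1, hm⟩
  obtain ⟨m, hm⟩ := reach y h
  rw [Function.iterate_fixed hy] at hm
  exact hm.symm

namespace NCMatching

variable {n k : ℕ} (m : NCMatching n k)

theorem eq_of_mem_arcs_of_endpoint {p q : ℕ × ℕ} (hp : p ∈ m.arcs) (hq : q ∈ m.arcs)
    {r : ℕ} (hpr : r = p.1 ∨ r = p.2) (hqr : r = q.1 ∨ r = q.2) : p = q := by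
  by_contra hpq
  have := m.endpoints_distinct p hp q hq hpq
  omega

open Classical in
/-- The other endpoint `p.1 + p.2 - r` of the arc `p` at `r`, and `r` itself at a ray. -/
noncomputable def partner (r : ℕ) : ℕ :=
  if h : ∃ p ∈ m.arcs, r = p.1 ∨ r = p.2 then h.choose.1 + h.choose.2 - r else r

variable {m}

theorem partner_eq {p : ℕ × ℕ} (hp : p ∈ m.arcs) {r : ℕ} (hr : r = p.1 ∨ r = p.2) :
    m.partner r = p.1 + p.2 - r := by
  have h : ∃ p ∈ m.arcs, r = p.1 ∨ r = p.2 := ⟨p, hp, hr⟩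
  obtain ⟨hq, hqr⟩ := h.choose_spec
  rw [partner, dif_pos h, m.eq_of_mem_arcs_of_endpoint hp hq hr hqr]

theorem partner_fst {p : ℕ × ℕ} (hp : p ∈ m.arcs) : m.partner p.1 = p.2 := by
  rw [partner_eq hp (Or.inl rfl)]
  omega

theorem partner_snd {p : ℕ × ℕ} (hp : p ∈ m.arcs) : m.partner p.2 = p.1 := by
  rw [partner_eq hp (Or.inr rfl)]
  omega

theorem partner_of_isRay {r : ℕ} (hr : m.IsRay r) : m.partner r = r := by
  rw [partner, dif_neg]
  rintro ⟨q, hq, hrq⟩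
  have := hr.2.2 q hq
  omega

theorem partner_mem_Ioo {p : ℕ × ℕ} (hp : p ∈ m.arcs) {r : ℕ}
    (hr : r ∈ Finset.Ioo p.1 p.2) :
    m.partner r ∈ Finset.Ioo p.1 p.2 ∧ m.partner (m.partner r) = r ∧ m.partner r ≠ r := by
  rw [Finset.mem_Ioo] at hr ⊢
  obtain ⟨q, hq, hrq⟩ := m.no_ray_under p hp r hr.1 hr.2
  have hqp : q ≠ p := by rintro rfl; omega
  have := m.endpoints_distinct p hp q hq hqp.symm
  have := m.noncross p hp q hq
  have := m.noncross q hq p hp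
  have := (m.mem_range q hq).2.1
  rw [partner_eq hq hrq, partner_eq hq (by omega)]
  omega

theorem fst_mod_two_ne_snd_mod_two {p : ℕ × ℕ} (hp : p ∈ m.arcs) : p.1 % 2 ≠ p.2 % 2 := by
  have hlt := (m.mem_range p hp).2.1
  have heven := Finset.even_card_of_involution m.partner
    (fun r hr => (partner_mem_Ioo hp hr).1) (fun r hr => (partner_mem_Ioo hp hr).2.1)
    (fun r hr => (partner_mem_Ioo hp hr).2.2)
  rw [Nat.card_Ioo, Nat.even_iff] at heven
  omega

end NCMatching

section Parity

variable {n k : ℕ} {a b : NCMatching n k}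

theorem glueRel_comm : glueRel b a = glueRel a b := by
  ext i j
  simp only [glueRel]
  tauto

instance : Std.Symm (glueRel a b) := ⟨fun _ _ h => by unfold glueRel at *; tauto⟩

instance : Std.Symm (Conn a b) := inferInstanceAs (Std.Symm (Relation.ReflTransGen _))

theorem conn_comm : Conn b a = Conn a b := by
  rw [Conn, Conn, glueRel_comm]

variable (a b) in
noncomputable def flow (w : ℕ) : ℕ :=
  if w % 2 = 1 then a.partner w else b.partner w

theorem eq_flow_of_mem_arcs {p : ℕ × ℕ} (hp : p ∈ a.arcs ∨ p ∈ b.arcs) :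
    p.2 = flow a b p.1 ∨ p.1 = flow a b p.2 := by
  rcases hp with hp | hp
  · have := NCMatching.fst_mod_two_ne_snd_mod_two hp
    rcases Nat.mod_two_eq_zero_or_one p.1 with h | h
    · right; rw [flow, if_pos (by omega), NCMatching.partner_snd hp]
    · left; rw [flow, if_pos h, NCMatching.partner_fst hp]
  · have := NCMatching.fst_mod_two_ne_snd_mod_two hp
    rcases Nat.mod_two_eq_zero_or_one p.1 with h | h
    · left; rw [flow, if_neg (by omega), NCMatching.partner_fst hp]
    · right; rw [flow, if_neg (by omega), NCMatching.partner_snd hp]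

theorem glueRel.eq_flow_or {z z' : ℕ} (h : glueRel a b z z') :
    z' = flow a b z ∨ z = flow a b z' := by
  rcases h with h | h | h | h
  · exact eq_flow_of_mem_arcs (Or.inl h)
  · exact (eq_flow_of_mem_arcs (Or.inl h)).symm
  · exact eq_flow_of_mem_arcs (Or.inr h)
  · exact (eq_flow_of_mem_arcs (Or.inr h)).symm

theorem not_conn_of_isRay_of_isRay {x y : ℕ} (hx : a.IsRay x) (hy : b.IsRay y)
    (hxo : x % 2 = 1) (hye : y % 2 = 0) : ¬ Conn a b x y := by
  intro h
  have hfx : Function.IsFixedPt (flow a b) x := by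
    rw [Function.IsFixedPt, flow, if_pos hxo, NCMatching.partner_of_isRay hx]
  have hfy : Function.IsFixedPt (flow a b) y := by
    rw [Function.IsFixedPt, flow, if_neg (by omega), NCMatching.partner_of_isRay hy]
  have := h.eq_of_isFixedPt (fun _ _ => glueRel.eq_flow_or) hfx hfy
  omega

theorem mod_two_eq_of_conn_of_isRay {x y : ℕ} (hx : a.IsRay x) (hy : b.IsRay y)
    (h : Conn a b x y) : x % 2 = y % 2 := by
  by_contra hne
  rcases Nat.mod_two_eq_zero_or_one x with hxe | hxo
  · rw [← conn_comm] at h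
    exact not_conn_of_isRay_of_isRay hy hx (by omega) hxe (symm h)
  · exact not_conn_of_isRay_of_isRay hx hy hxo (by omega) h

theorem InBa.mod_two_eq_of_conn (hab : InBa a b) {x y : ℕ} (h : Conn a b x y)
    (hx : a.IsRay x ∨ b.IsRay x) (hy : a.IsRay y ∨ b.IsRay y) : x % 2 = y % 2 := by
  rcases hx with hx | hx <;> rcases hy with hy | hy
  · by_contra hne
    exact hab.1 x y hx hy (by omega) h
  · exact mod_two_eq_of_conn_of_isRay hx hy h
  · exact (mod_two_eq_of_conn_of_isRay hy hx (symm h)).symm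
  · by_contra hne
    exact hab.2 x y hx hy (by omega) h

end Parity

section Sphere

variable {n k : ℕ} {a b : NCMatching n k}

variable (a b) in
def IsLineEnd (i : Fin n) : Prop :=
  a.IsRay ((i : ℕ) + 1) ∨ b.IsRay ((i : ℕ) + 1)

noncomputable def pole (i : Fin n) : EuclideanSpace ℝ (Fin 3) :=
  ((-1 : ℝ) ^ ((i : ℕ) + 1)) • np

theorem norm_np : ‖np‖ = 1 := by
  simp [np, EuclideanSpace.norm_eq, Fin.sum_univ_three]

theorem norm_pole (i : Fin n) : ‖pole i‖ = 1 := by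
  simp [pole, norm_smul, norm_np]

theorem pole_eq_pole_of_mod_two_eq {i j : Fin n}
    (h : ((i : ℕ) + 1) % 2 = ((j : ℕ) + 1) % 2) : pole i = pole j := by
  rw [pole, pole, neg_one_pow_eq_pow_mod_two, h, ← neg_one_pow_eq_pow_mod_two]

theorem mem_SComp_inter_iff {x : Fin n → EuclideanSpace ℝ (Fin 3)} :
    x ∈ SComp a ∩ SComp b ↔
      (∀ i, ‖x i‖ = 1) ∧ (∀ i j, glueRelF a b i j → x i = x j) ∧
        ∀ i, IsLineEnd a b i → x i = pole i := by
  constructor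
  · rintro ⟨⟨hnorm, harc_a, hray_a⟩, -, harc_b, hray_b⟩
    refine ⟨hnorm, fun i j hij => ?_, fun i hi => hi.elim (hray_a i) (hray_b i)⟩
    rcases hij with h | h | h | h
    · exact harc_a _ h i j rfl rfl
    · exact (harc_a _ h j i rfl rfl).symm
    · exact harc_b _ h i j rfl rfl
    · exact (harc_b _ h j i rfl rfl).symm
  · rintro ⟨hnorm, hglue, hpole⟩
    refine ⟨⟨hnorm, ?_, fun i hi => hpole i (Or.inl hi)⟩,
      ⟨hnorm, ?_, fun i hi => hpole i (Or.inr hi)⟩⟩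
    · rintro p hp i j hi hj
      obtain rfl : p = ((i : ℕ) + 1, (j : ℕ) + 1) := Prod.ext hi.symm hj.symm
      exact hglue i j (Or.inl hp)
    · rintro p hp i j hi hj
      obtain rfl : p = ((i : ℕ) + 1, (j : ℕ) + 1) := Prod.ext hi.symm hj.symm
      exact hglue i j (Or.inr (Or.inr (Or.inl hp)))

theorem conn_of_mk_eq {i j : Fin n} (h : Quot.mk (glueRelF a b) i = Quot.mk _ j) :
    Conn a b ((i : ℕ) + 1) ((j : ℕ) + 1) := by
  have : Std.Symm (glueRelF a b) := ⟨fun _ _ => symm (r := glueRel a b)⟩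
  rw [Quot.eq, Relation.EqvGen.eqvGen_eq_reflTransGen] at h
  exact h.lift (fun i : Fin n => (i : ℕ) + 1) fun _ _ => id

variable (a b) in
abbrev CircleClass : Type := {q : Quot (glueRelF a b) // IsCircleClass a b q}

theorem isCircleClass_iff {q : Quot (glueRelF a b)} :
    IsCircleClass a b q ↔ ¬ ∃ i, Quot.mk _ i = q ∧ IsLineEnd a b i := by
  simp only [IsCircleClass, IsLineEnd, not_exists, not_and, not_or]

open Classical in
variable (a b) in
noncomputable def extendByPoles (y : CircleClass a b → EuclideanSpace ℝ (Fin 3))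
    (q : Quot (glueRelF a b)) : EuclideanSpace ℝ (Fin 3) :=
  if h : ∃ i, Quot.mk _ i = q ∧ IsLineEnd a b i then pole h.choose
  else y ⟨q, isCircleClass_iff.2 h⟩

theorem extendByPoles_of_isCircleClass (y : CircleClass a b → EuclideanSpace ℝ (Fin 3))
    {q : Quot (glueRelF a b)} (hq : IsCircleClass a b q) :
    extendByPoles a b y q = y ⟨q, hq⟩ := by
  rw [extendByPoles, dif_neg (isCircleClass_iff.1 hq)]

theorem extendByPoles_mk_of_isLineEnd (hab : InBa a b)
    (y : CircleClass a b → EuclideanSpace ℝ (Fin 3))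
    {i : Fin n} (hi : IsLineEnd a b i) : extendByPoles a b y (Quot.mk _ i) = pole i := by
  have h : ∃ j, Quot.mk _ j = Quot.mk (glueRelF a b) i ∧ IsLineEnd a b j := ⟨i, rfl, hi⟩
  obtain ⟨hji, hj⟩ := h.choose_spec
  rw [extendByPoles, dif_pos h]
  exact pole_eq_pole_of_mod_two_eq (hab.mod_two_eq_of_conn (conn_of_mk_eq hji) hj hi)

theorem norm_extendByPoles {y : CircleClass a b → EuclideanSpace ℝ (Fin 3)}
    (hy : ∀ q, ‖y q‖ = 1) (q : Quot (glueRelF a b)) : ‖extendByPoles a b y q‖ = 1 := by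
  rw [extendByPoles]
  split_ifs
  exacts [norm_pole _, hy _]

theorem continuous_extendByPoles (q : Quot (glueRelF a b)) :
    Continuous fun y : CircleClass a b → EuclideanSpace ℝ (Fin 3) => extendByPoles a b y q := by
  simp only [extendByPoles]
  split_ifs
  exacts [continuous_const, continuous_apply _]

theorem extendByPoles_out_eq (hab : InBa a b) {x : Fin n → EuclideanSpace ℝ (Fin 3)}
    (hx : x ∈ SComp a ∩ SComp b) (i : Fin n) :
    extendByPoles a b (fun q => x q.1.out) (Quot.mk _ i) = x i := by
  obtain ⟨-, hglue, hpole⟩ := mem_SComp_inter_iff.1 hx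
  have hclass : ∀ {j}, Quot.mk (glueRelF a b) j = Quot.mk _ i → x j = x i :=
    congrArg (Quot.lift x hglue)
  by_cases hi : IsCircleClass a b (Quot.mk _ i)
  · rw [extendByPoles_of_isCircleClass _ hi]
    exact hclass (Quot.out_eq _)
  · obtain ⟨j, hji, hj⟩ := not_not.1 (mt isCircleClass_iff.2 hi)
    rw [← hji, extendByPoles_mk_of_isLineEnd hab _ hj, ← hpole j hj]
    exact hclass hji

noncomputable def interHomeomorphCircleClass (hab : InBa a b) :
    ↥(SComp a ∩ SComp b) ≃ₜ
      (CircleClass a b → Metric.sphere (0 : EuclideanSpace ℝ (Fin 3)) 1) where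
  toFun x q := ⟨x.1 q.1.out, mem_sphere_zero_iff_norm.2 ((mem_SComp_inter_iff.1 x.2).1 _)⟩
  invFun y := ⟨fun i => extendByPoles a b (fun q => y q) (Quot.mk _ i),
    mem_SComp_inter_iff.2
      ⟨fun i => norm_extendByPoles (fun q => mem_sphere_zero_iff_norm.1 (y q).2) _,
        fun _ _ hij => congrArg _ (Quot.sound hij),
        fun _ hi => extendByPoles_mk_of_isLineEnd hab _ hi⟩⟩
  left_inv x := Subtype.ext (funext (extendByPoles_out_eq hab x.2))
  right_inv y := funext fun q => Subtype.ext <| by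
    simp only [Quot.out_eq]
    exact extendByPoles_of_isCircleClass _ q.2
  continuous_toFun := continuous_pi fun _ =>
    ((continuous_apply _).comp continuous_subtype_val).subtype_mk _
  continuous_invFun := by
    refine Continuous.subtype_mk (continuous_pi fun i => ?_) _
    exact (continuous_extendByPoles _).comp
      (continuous_pi fun q => continuous_subtype_val.comp (continuous_apply q))

end Sphere

/-- For `b ∈ B_a^{n-k,k}` the intersection `S_a ∩ S_b ⊆ (S²)^n` is homeomorphic to
`(S²)^c`, where `c` is the number of circle components of `a w(b)`. -/
theorem intersection_homeo_sphere_power (n k : ℕ) (a b : NCMatching n k) (hab : InBa a b) :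
    Nonempty ((↥(SComp a ∩ SComp b)) ≃ₜ
      (Fin (circles a b) → ↥(Metric.sphere (0 : EuclideanSpace ℝ (Fin 3)) 1))) :=
  ⟨(interHomeomorphCircleClass hab).trans (Homeomorph.piCongrLeft
    (Y := fun _ => Metric.sphere (0 : EuclideanSpace ℝ (Fin 3)) 1)
    (Finite.equivFin (CircleClass a b)))⟩
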